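/- arXiv:1411.3287 — 5 statements merged into one kernel-verified Lean document; each statement's English description precedes it below -/
import Mathlib

section
/- Suppose 1 ≤ m < ∞ is a real number, 0 ≤ s < r < ∞, 0 ≤ κ < ∞, I = {t : s < t ≤ r}, and f : I → {y : 0 < y < ∞} is a Lebesgue measurable function satisfying, for every t ∈ I, both limsup_{u → t-} f(u) ≤ f(t) and f(t) ≤ f(r) + κ · f(r)^{1/m} · ∫_t^r u^{-1} f(u)^{1-1/m} du (Lebesgue integral). Then f(t) ≤ (1 + m^{-1} κ log(r/t))^m · f(r) for every t ∈ I. -/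
/-!
Write `A = f r`, `B = κ A^(1/m)` and `H x = A + B ∫_x^r u⁻¹ f(u)^(1-1/m) du`, so that `f ≤ H`.
For `a > A^(1/m)` the function `G x = (a + (B/m) log(r/x))^m` solves
`G' = -(B/x) G^(1-1/m)`, i.e. `G x = a^m + B ∫_x^r u⁻¹ G(u)^(1-1/m) du` with `a^m > A`.
Both `H` and `G` are continuous, and at the largest point `x` of `{G ≤ H}` the inequality
`f ≤ H < G` on `(x, r]` together with the monotonicity of `y ↦ y^(1-1/m)` would give `H x < G x`;
so `H < G` everywhere. Letting `a ↓ A^(1/m)` gives the bound.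
-/

open MeasureTheory Filter Set Real

theorem forall_lt_of_forall_Ioc_lt {a b : ℝ} {H G : ℝ → ℝ}
    (hH : ContinuousOn H (Icc a b)) (hG : ContinuousOn G (Icc a b))
    (step : ∀ x ∈ Icc a b, (∀ u ∈ Ioc x b, H u < G u) → H x < G x) :
    ∀ x ∈ Icc a b, H x < G x := by
  by_contra! hK
  obtain ⟨x, hx, hGH⟩ := hK
  set K := {x ∈ Icc a b | G x ≤ H x}
  have hK : IsCompact K := isCompact_Icc.of_isClosed_subset
    (isClosed_Icc.isClosed_le hG hH) (sep_subset _ _)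
  obtain ⟨hx₁, hGH₁⟩ : sSup K ∈ K := hK.sSup_mem ⟨x, hx, hGH⟩
  refine (step _ hx₁ fun u hu => lt_of_not_ge fun hle => ?_).not_ge hGH₁
  exact hu.1.not_ge (le_csSup hK.bddAbove ⟨⟨hx₁.1.trans hu.1.le, hu.2⟩, hle⟩)

theorem continuousOn_setIntegral_Ioc_left {g : ℝ → ℝ} {t r : ℝ}
    (hg : IntegrableOn g (Ioc t r)) :
    ContinuousOn (fun x => ∫ u in Ioc x r, g u) (Icc t r) := by
  rcases le_total t r with htr | hrt
  · have hprim := intervalIntegral.continuousOn_primitive_interval_left (a := t) (b := r)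
      (f := g) (μ := volume) (by rwa [uIcc_of_le htr, integrableOn_Icc_iff_integrableOn_Ioc])
    rw [uIcc_of_le htr] at hprim
    exact hprim.congr fun x hx => (intervalIntegral.integral_of_le hx.2).symm
  · exact (subsingleton_Icc_of_ge hrt).continuousOn _

theorem add_mul_log_sub_pos {a c r u : ℝ} (ha : 0 < a) (hc : 0 ≤ c) (hu : 0 < u)
    (hur : u ≤ r) : 0 < a + c * (log r - log u) := by
  have := log_le_log hu hur
  positivity

theorem hasDerivAt_rpow_add_mul_log_sub {a c r m x : ℝ} (hx : 0 < x)
    (hbase : 0 < a + c * (log r - log x)) :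
    HasDerivAt (fun u => (a + c * (log r - log u)) ^ m)
      (-(m * c * (x⁻¹ * (a + c * (log r - log x)) ^ (m - 1)))) x := by
  have hlin : HasDerivAt (fun u => a + c * (log r - log u)) (c * (0 - x⁻¹)) x :=
    (((hasDerivAt_const x (log r)).sub (hasDerivAt_log hx.ne')).const_mul c).const_add a
  convert hlin.rpow_const (p := m) (Or.inl hbase.ne') using 1
  ring

theorem rpow_rpow_one_sub_inv {b m : ℝ} (hb : 0 ≤ b) (hm : m ≠ 0) :
    (b ^ m) ^ (1 - 1 / m) = b ^ (m - 1) := by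
  rw [← rpow_mul hb]
  congr 1
  field_simp

theorem integral_inv_mul_rpow_add_mul_log_sub {a c r m x : ℝ} (ha : 0 < a) (hc : 0 ≤ c)
    (hm : m ≠ 0) (hx : 0 < x) (hxr : x ≤ r) :
    m * c * ∫ u in Ioc x r, u⁻¹ * ((a + c * (log r - log u)) ^ m) ^ (1 - 1 / m)
      = (a + c * (log r - log x)) ^ m - a ^ m := by
  have hbase : ∀ u ∈ Icc x r, 0 < a + c * (log r - log u) := fun u hu =>
    add_mul_log_sub_pos ha hc (hx.trans_le hu.1) hu.2
  have hderiv : ∀ u ∈ uIcc x r, HasDerivAt (fun u => (a + c * (log r - log u)) ^ m)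
      (-(m * c * (u⁻¹ * (a + c * (log r - log u)) ^ (m - 1)))) u := fun u hu => by
    rw [uIcc_of_le hxr] at hu
    exact hasDerivAt_rpow_add_mul_log_sub (hx.trans_le hu.1) (hbase u hu)
  have hcont : ContinuousOn (fun u => -(m * c * (u⁻¹ * (a + c * (log r - log u)) ^ (m - 1))))
      (uIcc x r) := by
    rw [uIcc_of_le hxr]
    have hpos : ∀ u ∈ Icc x r, u ≠ 0 := fun u hu => (hx.trans_le hu.1).ne'
    refine (continuousOn_const.mul ((continuousOn_inv₀.mono hpos).mul ?_)).neg
    exact ((continuousOn_const.add (continuousOn_const.mul (continuousOn_const.sub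
      (continuousOn_log.mono hpos)))).rpow_const fun u hu => Or.inl (hbase u hu).ne')
  have hftc := intervalIntegral.integral_eq_sub_of_hasDerivAt hderiv hcont.intervalIntegrable
  rw [intervalIntegral.integral_neg, intervalIntegral.integral_of_le hxr,
    integral_const_mul] at hftc
  rw [setIntegral_congr_fun measurableSet_Ioc fun u hu => by
    rw [rpow_rpow_one_sub_inv (hbase u (Ioc_subset_Icc_self hu)).le hm]]
  simp only [sub_self, mul_zero, add_zero] at hftc
  linarith

theorem lt_rpow_add_mul_log_sub_of_le_add_integral {f : ℝ → ℝ} {A B a m t r : ℝ}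
    (ht : 0 < t) (htr : t ≤ r) (hm : 1 ≤ m) (hB : 0 ≤ B) (ha : 0 < a) (hAa : A < a ^ m)
    (hf_nonneg : ∀ u ∈ Ioc t r, 0 ≤ f u)
    (hg : IntegrableOn (fun u => u⁻¹ * f u ^ (1 - 1 / m)) (Ioc t r))
    (hf_le : ∀ x ∈ Icc t r, f x ≤ A + B * ∫ u in Ioc x r, u⁻¹ * f u ^ (1 - 1 / m)) :
    f t < (a + B / m * (log r - log t)) ^ m := by
  have hm0 : m ≠ 0 := by positivity
  have hc : 0 ≤ B / m := by positivity
  set H := fun x => A + B * ∫ u in Ioc x r, u⁻¹ * f u ^ (1 - 1 / m)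
  set G := fun x => (a + B / m * (log r - log x)) ^ m
  have hpos : ∀ u ∈ Icc t r, u ≠ 0 := fun u hu => (ht.trans_le hu.1).ne'
  have hH : ContinuousOn H (Icc t r) :=
    continuousOn_const.add (continuousOn_const.mul (continuousOn_setIntegral_Ioc_left hg))
  have hG : ContinuousOn G (Icc t r) :=
    (continuousOn_const.add (continuousOn_const.mul (continuousOn_const.sub
      (continuousOn_log.mono hpos)))).rpow_const fun u hu =>
        Or.inl (add_mul_log_sub_pos ha hc (ht.trans_le hu.1) hu.2).ne'
  refine (hf_le t ⟨le_rfl, htr⟩).trans_lt (forall_lt_of_forall_Ioc_lt hH hG ?_ t ⟨le_rfl, htr⟩)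
  intro x hx hHG
  have hexp : 0 ≤ 1 - 1 / m := sub_nonneg.2 ((div_le_one₀ (by positivity)).2 hm)
  have hsub : Ioc x r ⊆ Icc t r := fun u hu => ⟨hx.1.trans hu.1.le, hu.2⟩
  have hfG : ∀ u ∈ Ioc x r, u⁻¹ * f u ^ (1 - 1 / m) ≤ u⁻¹ * G u ^ (1 - 1 / m) := by
    intro u hu
    have hu0 : 0 ≤ u⁻¹ := inv_nonneg.2 (ht.trans_le (hsub hu).1).le
    gcongr
    · exact hf_nonneg u ⟨hx.1.trans_lt hu.1, hu.2⟩
    · exact (hf_le u (hsub hu)).trans (hHG u hu).le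
  have hGint : IntegrableOn (fun u => u⁻¹ * G u ^ (1 - 1 / m)) (Ioc x r) :=
    (((continuousOn_inv₀.mono hpos).mul (hG.rpow_const fun _ _ => Or.inr hexp)).integrableOn_Icc
      ).mono_set hsub
  have hG_eq : B * ∫ u in Ioc x r, u⁻¹ * G u ^ (1 - 1 / m) = G x - a ^ m := by
    rw [← integral_inv_mul_rpow_add_mul_log_sub ha hc hm0 (ht.trans_le hx.1) hx.2]
    congr 1
    field_simp
  calc H x ≤ A + B * ∫ u in Ioc x r, u⁻¹ * G u ^ (1 - 1 / m) := by
        have hmono := setIntegral_mono_on (hg.mono_set (Ioc_subset_Ioc_left hx.1)) hGint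
          measurableSet_Ioc hfG
        exact add_le_add_right (mul_le_mul_of_nonneg_left hmono hB) A
    _ < G x := by linarith

theorem stmt_0_general (m s r κ : ℝ) (hm : 1 ≤ m) (hs : 0 ≤ s) (hsr : s < r)
    (hκ : 0 ≤ κ) (f : ℝ → ℝ)
    (hf_pos : ∀ t ∈ Set.Ioc s r, 0 < f t)
    (hf_int : ∀ t ∈ Set.Ioc s r,
      f t ≤ f r + κ * f r ^ (1 / m) * ∫ u in Set.Ioc t r, u⁻¹ * f u ^ (1 - 1 / m)) :
    ∀ t ∈ Set.Ioc s r, f t ≤ (1 + m⁻¹ * κ * Real.log (r / t)) ^ m * f r := by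
  intro t ⟨hst, htr⟩
  have ht : 0 < t := hs.trans_lt hst
  have hm0 : 0 < m := one_pos.trans_le hm
  have hA : 0 < f r := hf_pos r ⟨hsr, le_rfl⟩
  have hL : 0 ≤ log (r / t) := log_nonneg ((one_le_div ht).2 htr)
  have hIoc : Icc t r ⊆ Ioc s r := Icc_subset_Ioc_iff htr |>.2 ⟨hst, le_rfl⟩
  by_cases hg : IntegrableOn (fun u => u⁻¹ * f u ^ (1 - 1 / m)) (Ioc t r)
  · set a₀ := f r ^ (1 / m)
    have ha₀ : 0 < a₀ := by positivity
    have ha₀m : a₀ ^ m = f r := by simp only [a₀, one_div, rpow_inv_rpow hA.le hm0.ne']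
    have hcomp : ∀ a ∈ Ioi a₀, f t ≤ (a + κ * a₀ / m * log (r / t)) ^ m := fun a ha => by
      rw [log_div (hsr.trans_le' hs).ne' ht.ne']
      exact (lt_rpow_add_mul_log_sub_of_le_add_integral ht htr hm (by positivity)
        (ha₀.trans ha) (ha₀m ▸ rpow_lt_rpow ha₀.le ha hm0)
        (fun u hu => (hf_pos u (hIoc (Ioc_subset_Icc_self hu))).le) hg
        (fun x hx => hf_int x (hIoc hx))).le
    have hcont : ContinuousAt (fun a => (a + κ * a₀ / m * log (r / t)) ^ m) a₀ :=
      (continuousAt_id.add continuousAt_const).rpow_const (Or.inr hm0.le)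
    calc f t ≤ (a₀ + κ * a₀ / m * log (r / t)) ^ m :=
          ge_of_tendsto (hcont.tendsto.mono_left nhdsWithin_le_nhds)
            (eventually_nhdsWithin_of_forall hcomp)
      _ = (1 + m⁻¹ * κ * log (r / t)) ^ m * f r := by
          rw [← ha₀m, ← mul_rpow (by positivity) ha₀.le]
          congr 1
          ring
  · -- the Bochner integral of a non-integrable function is `0`
    have hf_le := hf_int t ⟨hst, htr⟩
    rw [integral_undef hg, mul_zero, add_zero] at hf_le
    have hone : 1 ≤ (1 + m⁻¹ * κ * log (r / t)) ^ m :=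
      one_le_rpow (le_add_of_nonneg_right (by positivity)) hm0.le
    exact hf_le.trans (le_mul_of_one_le_left hA.le hone)

/-- Calculus lemma: if `f : (s, r] → (0, ∞)` is Lebesgue measurable, left upper
semicontinuous, and satisfies the integral growth inequality
`f t ≤ f r + κ f(r)^(1/m) ∫_t^r u⁻¹ f(u)^(1-1/m) du`, then
`f t ≤ (1 + m⁻¹ κ log (r/t))^m f r` on `(s, r]`. -/
theorem stmt_0 (m s r κ : ℝ) (hm : 1 ≤ m) (hs : 0 ≤ s) (hsr : s < r)
    (hκ : 0 ≤ κ) (f : ℝ → ℝ)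
    (hf_meas : AEMeasurable f (volume.restrict (Set.Ioc s r)))
    (hf_pos : ∀ t ∈ Set.Ioc s r, 0 < f t)
    (hf_limsup : ∀ t ∈ Set.Ioc s r, Filter.limsup f (nhdsWithin t (Set.Ioo s t)) ≤ f t)
    (hf_int : ∀ t ∈ Set.Ioc s r,
      f t ≤ f r + κ * f r ^ (1 / m) * ∫ u in Set.Ioc t r, u⁻¹ * f u ^ (1 - 1 / m)) :
    ∀ t ∈ Set.Ioc s r, f t ≤ (1 + m⁻¹ * κ * Real.log (r / t)) ^ m * f r :=
  stmt_0_general m s r κ hm hs hsr hκ f hf_pos hf_int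
end

section
/- Suppose m and n are positive integers with m < n, and let Y denote the vector space of all symmetric endomorphisms of Euclidean ℝⁿ, i.e. Y = { σ : ℝⁿ → ℝⁿ linear with σ = σ* }. Then Y is spanned (as a real vector space) by the set of orthogonal projections proj_P of ℝⁿ onto P, where P ranges over all m-dimensional linear subspaces of ℝⁿ; that is, the linear span of { proj_P : P an m-dimensional linear subspace of ℝⁿ } equals Y. -/
/-!
By the spectral theorem a symmetric map is a real combination of the rank-one projections
`p_i` onto the lines of an orthonormal eigenbasis, so it suffices to reach each `p_i`. Complete
`p_i` to `m + 1` such projections with sum `S`; leaving one out at a time gives `m + 1`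
projections `S - p_j` onto `m`-dimensional subspaces, summing to `m • S`. Hence `S`, and then
`p_i = S - (S - p_i)`, lie in their span.
-/

open Module

/-- The orthogonal projection of `ℝⁿ` onto a subspace `P`, as an endomorphism of `ℝⁿ`. -/
noncomputable def projEndo {n : ℕ} (P : Submodule ℝ (EuclideanSpace ℝ (Fin n))) :
    EuclideanSpace ℝ (Fin n) →ₗ[ℝ] EuclideanSpace ℝ (Fin n) :=
  P.subtype ∘ₗ (P.orthogonalProjection).toLinearMap

open InnerProductSpace

theorem Submodule.mem_span_image_sum_erase {K M ι : Type*} [DivisionRing K] [CharZero K]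
    [AddCommGroup M] [Module K M] [DecidableEq ι] (f : ι → M) {s : Finset ι}
    (hs : 2 ≤ s.card) {i : ι} (hi : i ∈ s) :
    f i ∈ span K ((fun j ↦ ∑ k ∈ s.erase j, f k) '' s) := by
  set S := ∑ k ∈ s, f k
  have h_erase : ∀ j ∈ s, ∑ k ∈ s.erase j, f k = S - f j := fun j hj ↦
    Finset.sum_erase_eq_sub hj
  have h_mem : ∀ j ∈ s, S - f j ∈ span K ((fun j ↦ ∑ k ∈ s.erase j, f k) '' s) := fun j hj ↦
    h_erase j hj ▸ subset_span ⟨j, hj, rfl⟩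
  have h_total : ∑ j ∈ s, (S - f j) = ((s.card : K) - 1) • S := by
    rw [Finset.sum_sub_distrib, Finset.sum_const, sub_smul, one_smul, Nat.cast_smul_eq_nsmul]
  have h_card : (s.card : K) - 1 ≠ 0 := by
    rw [sub_ne_zero, Ne, ← Nat.cast_one, Nat.cast_inj]; omega
  have hS : S ∈ span K ((fun j ↦ ∑ k ∈ s.erase j, f k) '' s) := by
    rw [← inv_smul_smul₀ h_card S, ← h_total]
    exact smul_mem _ _ (sum_mem h_mem)
  simpa using sub_mem hS (h_mem i hi)

section

variable {𝕜 E : Type*} [RCLike 𝕜] [NormedAddCommGroup E] [InnerProductSpace 𝕜 E]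

theorem Orthonormal.finrank_span_image {ι : Type*} {v : ι → E} (hv : Orthonormal 𝕜 v)
    (s : Finset ι) : finrank 𝕜 (Submodule.span 𝕜 (v '' s)) = s.card := by
  classical
  rw [← Finset.coe_image, finrank_eq_card_basis (OrthonormalBasis.span hv s).toBasis]
  simp

variable [FiniteDimensional 𝕜 E]

theorem Orthonormal.starProjection_span_image {ι : Type*} {v : ι → E} (hv : Orthonormal 𝕜 v)
    (s : Finset ι) :
    ((Submodule.span 𝕜 (v '' s)).starProjection : E →ₗ[𝕜] E) =
      ∑ k ∈ s, (rankOne 𝕜 (v k) (v k) : E →ₗ[𝕜] E) := by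
  classical
  rw [← Finset.coe_image, (OrthonormalBasis.span hv s).starProjection_eq_sum_rankOne,
    ContinuousLinearMap.toLinearMap_sum]
  simp only [OrthonormalBasis.span_apply]
  exact Finset.sum_coe_sort s fun k ↦ (rankOne 𝕜 (v k) (v k) : E →ₗ[𝕜] E)

theorem Orthonormal.rankOne_self_mem_span_starProjection {ι : Type*} {v : ι → E}
    (hv : Orthonormal 𝕜 v) {m : ℕ} (hm : 0 < m) {s : Finset ι} (hs : s.card = m + 1) {i : ι}
    (hi : i ∈ s) :
    (rankOne 𝕜 (v i) (v i) : E →ₗ[𝕜] E) ∈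
      Submodule.span 𝕜 {T : E →ₗ[𝕜] E | ∃ K : Submodule 𝕜 E, finrank 𝕜 K = m ∧
        T = K.starProjection} := by
  classical
  refine Submodule.span_mono ?_ (Submodule.mem_span_image_sum_erase
    (fun k ↦ (rankOne 𝕜 (v k) (v k) : E →ₗ[𝕜] E)) (by omega) hi)
  rintro _ ⟨j, hj, rfl⟩
  refine ⟨_, ?_, (hv.starProjection_span_image _).symm⟩
  rw [hv.finrank_span_image, Finset.card_erase_of_mem hj, hs, Nat.add_sub_cancel]

theorem LinearMap.IsSymmetric.mem_span_rankOne_eigenvectorBasis {T : E →ₗ[𝕜] E}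
    (hT : T.IsSymmetric) {n : ℕ} (hn : finrank 𝕜 E = n) :
    T ∈ Submodule.span 𝕜
      (Set.range fun i ↦ (rankOne 𝕜 (hT.eigenvectorBasis hn i) (hT.eigenvectorBasis hn i) :
        E →ₗ[𝕜] E)) := by
  set b := hT.eigenvectorBasis hn
  have hT_eq : T = ∑ i, (hT.eigenvalues hn i : 𝕜) • (rankOne 𝕜 (b i) (b i) : E →ₗ[𝕜] E) := by
    ext x
    conv_lhs => rw [← b.sum_repr' x]
    simp [b, map_sum, map_smul, smul_smul, mul_comm]
  rw [hT_eq]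
  exact Submodule.sum_mem _ fun i _ ↦ Submodule.smul_mem _ _ (Submodule.subset_span ⟨i, rfl⟩)

end

def LinearMap.isSymmetricSubmodule (E : Type*) [NormedAddCommGroup E] [InnerProductSpace ℝ E] :
    Submodule ℝ (E →ₗ[ℝ] E) where
  carrier := {T | T.IsSymmetric}
  zero_mem' := LinearMap.IsSymmetric.zero
  add_mem' := LinearMap.IsSymmetric.add
  smul_mem' c _ hT := hT.smul (by simp)

theorem span_starProjection_finrank_eq_isSymmetricSubmodule {E : Type*} [NormedAddCommGroup E]
    [InnerProductSpace ℝ E] [FiniteDimensional ℝ E] {m : ℕ} (hm : 0 < m)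
    (hmE : m < finrank ℝ E) :
    Submodule.span ℝ {T : E →ₗ[ℝ] E | ∃ K : Submodule ℝ E, finrank ℝ K = m ∧
      T = K.starProjection} = LinearMap.isSymmetricSubmodule E := by
  refine le_antisymm (Submodule.span_le.mpr ?_) fun T hT ↦ ?_
  · rintro _ ⟨K, -, rfl⟩
    exact K.starProjection_isSymmetric
  refine Submodule.span_le.mpr ?_ (hT.mem_span_rankOne_eigenvectorBasis rfl)
  rintro _ ⟨i, rfl⟩
  obtain ⟨s, his, hs⟩ : ∃ s : Finset (Fin (finrank ℝ E)), {i} ⊆ s ∧ s.card = m + 1 :=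
    Finset.exists_superset_card_eq (by simp) (by simp [hmE])
  exact (hT.eigenvectorBasis rfl).orthonormal.rankOne_self_mem_span_starProjection hm hs
    (Finset.singleton_subset_iff.mp his)

/-- For `1 ≤ m < n`, the symmetric endomorphisms of `ℝⁿ` are spanned by the orthogonal
projections onto `m`-dimensional subspaces. -/
theorem stmt_3 (m n : ℕ) (hm : 0 < m) (hmn : m < n) :
    (Submodule.span ℝ {σ : EuclideanSpace ℝ (Fin n) →ₗ[ℝ] EuclideanSpace ℝ (Fin n) |
        ∃ P : Submodule ℝ (EuclideanSpace ℝ (Fin n)), finrank ℝ P = m ∧ σ = projEndo P} :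
      Set (EuclideanSpace ℝ (Fin n) →ₗ[ℝ] EuclideanSpace ℝ (Fin n))) =
    {σ | LinearMap.IsSymmetric σ} :=
  congrArg SetLike.coe (span_starProjection_finrank_eq_isSymmetricSubmodule hm
    (finrank_euclideanSpace_fin (𝕜 := ℝ) ▸ hmn))
end

section
/- Suppose Y is a finite dimensional normed vectorspace over ℝ, Φ is a family of open subsets of Y, and h : ⋃Φ → {t : 0 < t < ∞} is defined by h(y) = (1/20) · sup { min{1, dist(y, Y ∖ Υ)} : Υ ∈ Φ } for y ∈ ⋃Φ. Then there exist a countable subset B of ⋃Φ and, for each b ∈ B, a function g_b : Y → ℝ with the following properties: (1) for every y ∈ B, the set B_y = { b ∈ B : B̄(b,10h(b)) ∩ B̄(y,10h(y)) ≠ ∅ } satisfies card B_y ≤ 129^{dim Y}; (2) for every b ∈ B, 0 ≤ g_b(y) ≤ 1 for all y ∈ Y, the support of g_b is contained in B̄(b,10h(b)), and the restriction of g_b to B̄(y,10h(y)) is Lipschitzian with Lipschitz constant at most 130^{dim Y} · h(y)^{-1}, for every y ∈ ⋃Φ; (3) Σ_{b ∈ B} g_b(y) = 1 for every y ∈ ⋃Φ.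 -/
/-!
Let `U = ⋃₀ Φ`, so that `h` is positive and `1/20`-Lipschitz on `U` and
`closedBall y (10 * h y) ⊆ U` for `y ∈ U`. Take a maximal set `B ⊆ U` whose balls
`closedBall b (h b)` are pairwise disjoint. By maximality and the Lipschitz bound every `z ∈ U`
lies within `5 * h b` of some `b ∈ B`, and two balls of radius `10 * h` that meet have radii
within a factor `3` of each other; comparing Haar measures of disjoint balls then bounds the overlap
number by `129 ^ dim Y`. The functions `g b` are the tent functions equal to `1` on
`closedBall b (5 * h b)` and vanishing off `closedBall b (10 * h b)`, divided by their locally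
finite sum, which is at least `1` on `U`.
-/

open Metric Set Module Topology MeasureTheory
open scoped ENNReal

theorem exists_separated_subset_forall_dist_le {α : Type*} [PseudoMetricSpace α] (s : Set α)
    (r : α → ℝ) (hr : ∀ x ∈ s, 0 ≤ r x) :
    ∃ t ⊆ s, t.Pairwise (fun a b => r a + r b < dist a b) ∧
      ∀ x ∈ s, ∃ b ∈ t, dist x b ≤ r x + r b := by
  obtain ⟨t, ht⟩ := zorn_subset {t | t ⊆ s ∧ t.Pairwise fun a b => r a + r b < dist a b}
    fun c hc hchain => ⟨⋃₀ c, ⟨sUnion_subset fun t ht => (hc ht).1,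
      (pairwise_sUnion hchain.directedOn).2 fun t ht => (hc ht).2⟩,
      fun _ => subset_sUnion_of_mem⟩
  refine ⟨t, ht.prop.1, ht.prop.2, fun x hx => ?_⟩
  by_contra! hfar
  have hxt : x ∈ t := ht.mem_of_prop_insert ⟨insert_subset hx ht.prop.1,
    ht.prop.2.insert fun b hb _ => ⟨hfar b hb, by rw [add_comm, dist_comm]; exact hfar b hb⟩⟩
  linarith [hfar x hxt, hr x hx, dist_self x]

theorem Set.Pairwise.countable_of_add_lt_dist {α : Type*} [PseudoMetricSpace α]
    [TopologicalSpace.SeparableSpace α] {t : Set α} {r : α → ℝ} (hr : ∀ x ∈ t, 0 < r x)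
    (ht : t.Pairwise fun a b => r a + r b < dist a b) : t.Countable :=
  Set.PairwiseDisjoint.countable_of_isOpen (s := fun x => ball x (r x))
    (fun _ ha _ hb hab => ball_disjoint_ball (ht ha hb hab).le) (fun _ _ => isOpen_ball)
    fun x hx => nonempty_ball.2 (hr x hx)

section Bump

variable {α : Type*} [PseudoMetricSpace α]

noncomputable def bump (c : α) (ρ : ℝ) (z : α) : ℝ := max 0 (min 1 (2 - dist z c / ρ))

variable {c z w : α} {ρ : ℝ}

theorem bump_nonneg : 0 ≤ bump c ρ z := le_max_left _ _

theorem bump_eq_one (hρ : 0 < ρ) (hz : dist z c ≤ ρ) : bump c ρ z = 1 := by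
  have : 1 ≤ 2 - dist z c / ρ := by linarith [(div_le_one hρ).2 hz]
  simp [bump, min_eq_left this]

theorem support_bump_subset (hρ : 0 < ρ) :
    Function.support (bump c ρ) ⊆ closedBall c (2 * ρ) := by
  intro z hz
  by_contra hfar
  have : 2 - dist z c / ρ ≤ 0 := by
    rw [sub_nonpos, le_div_iff₀ hρ]; exact (not_le.1 hfar).le
  exact hz (max_eq_left ((min_le_right _ _).trans this))

theorem abs_bump_sub_bump_le (hρ : 0 ≤ ρ) : |bump c ρ z - bump c ρ w| ≤ dist z w / ρ := by
  calc |bump c ρ z - bump c ρ w|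
      ≤ |min 1 (2 - dist z c / ρ) - min 1 (2 - dist w c / ρ)| := by
        simp only [bump, max_comm (0 : ℝ)]; exact abs_max_sub_max_le_abs _ _ _
    _ ≤ |(2 - dist z c / ρ) - (2 - dist w c / ρ)| := by
        simpa using abs_min_sub_min_le_max 1 (2 - dist z c / ρ) 1 (2 - dist w c / ρ)
    _ = |dist w c - dist z c| / ρ := by
        rw [show 2 - dist z c / ρ - (2 - dist w c / ρ) = (dist w c - dist z c) / ρ by ring,
          abs_div, abs_of_nonneg hρ]
    _ ≤ dist z w / ρ := by
        gcongr; rw [dist_comm z w]; exact abs_dist_sub_le w z c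

end Bump

theorem abs_div_sub_div_le {a a' s s' : ℝ} (ha' : 0 ≤ a') (ha's' : a' ≤ s') (hs : 1 ≤ s)
    (hs' : 0 < s') : |a / s - a' / s'| ≤ |a - a'| + |s - s'| := by
  have hq : a' / s' ≤ 1 := (div_le_one hs').2 ha's'
  have hq0 : 0 ≤ a' / s' := div_nonneg ha' hs'.le
  calc |a / s - a' / s'| = |(a - a') / s + a' / s' * ((s' - s) / s)| := by
        congr 1; field_simp; ring
    _ ≤ |a - a'| / s + a' / s' * (|s - s'| / s) := by
        refine (abs_add_le _ _).trans_eq ?_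
        rw [abs_mul, abs_of_nonneg hq0, abs_div, abs_div, abs_of_pos (by linarith : 0 < s),
          abs_sub_comm s' s]
    _ ≤ |a - a'| + 1 * |s - s'| := by
        gcongr
        · exact div_le_self (abs_nonneg _) hs
        · exact div_le_self (abs_nonneg _) hs
    _ = |a - a'| + |s - s'| := by ring

theorem abs_tsum_sub_tsum_le {ι X : Type*} [PseudoMetricSpace X] {f : ι → X → ℝ}
    {s : Set ι} {K : Set X} {N : ℕ} {L : ℝ} (hL : 0 ≤ L) (hs : s.encard ≤ N)
    (hzero : ∀ i ∉ s, ∀ z ∈ K, f i z = 0)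
    (hf : ∀ i ∈ s, ∀ z ∈ K, ∀ w ∈ K, |f i z - f i w| ≤ L * dist z w) {z w : X}
    (hz : z ∈ K) (hw : w ∈ K) : |∑' i, f i z - ∑' i, f i w| ≤ N * L * dist z w := by
  obtain ⟨hfin, hcard⟩ := encard_le_coe_iff_finite_ncard_le.1 hs
  have hsum : ∀ x ∈ K, ∑' i, f i x = ∑ i ∈ hfin.toFinset, f i x := fun x hx =>
    tsum_eq_sum fun i hi => hzero i (by simpa using hi) x hx
  rw [hsum z hz, hsum w hw, ← Finset.sum_sub_distrib]
  calc |∑ i ∈ hfin.toFinset, (f i z - f i w)|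
      ≤ ∑ i ∈ hfin.toFinset, |f i z - f i w| := Finset.abs_sum_le_sum_abs _ _
    _ ≤ ∑ _i ∈ hfin.toFinset, L * dist z w :=
        Finset.sum_le_sum fun i hi => hf i (by simpa using hi) z hz w hw
    _ = s.ncard * (L * dist z w) := by
        rw [Finset.sum_const, nsmul_eq_mul, ncard_eq_toFinset_card s hfin]
    _ ≤ N * L * dist z w := by rw [mul_assoc]; gcongr

theorem encard_le_pow_finrank_of_pairwiseDisjoint {E : Type*} [NormedAddCommGroup E]
    [NormedSpace ℝ E] [FiniteDimensional ℝ E] {s : Set E} {y : E} {r R : ℝ} {N : ℕ}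
    (hr : 0 < r) (hs : s.PairwiseDisjoint (closedBall · r))
    (hsub : ∀ b ∈ s, closedBall b r ⊆ closedBall y R) (hR : R ≤ N * r) :
    s.encard ≤ N ^ finrank ℝ E := by
  borelize E
  set μ : Measure E := Measure.addHaar
  set c := ENNReal.ofReal (r ^ finrank ℝ E) * μ (ball 0 1)
  have hc0 : c ≠ 0 := mul_ne_zero (by simp [hr]) (measure_ball_pos μ 0 one_pos).ne'
  have hctop : c ≠ ∞ := ENNReal.mul_ne_top ENNReal.ofReal_ne_top measure_ball_lt_top.ne
  have hcount : s.Countable := (hs.mono fun _ => ball_subset_closedBall).countable_of_isOpen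
    (fun _ _ => isOpen_ball) fun _ _ => nonempty_ball.2 hr
  have key : (s.encard : ℝ≥0∞) * c ≤ (N : ℝ≥0∞) ^ finrank ℝ E * c := calc
    (s.encard : ℝ≥0∞) * c = ∑' b : s, μ (closedBall b r) := by
        rw [← ENNReal.tsum_set_const]
        exact tsum_congr fun b => (Measure.addHaar_closedBall μ b hr.le).symm
    _ = μ (⋃ b ∈ s, closedBall b r) :=
        (measure_biUnion hcount hs fun _ _ => measurableSet_closedBall).symm
    _ ≤ μ (closedBall y (N * r)) :=
        measure_mono <| iUnion₂_subset fun b hb =>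
          (hsub b hb).trans (closedBall_subset_closedBall hR)
    _ = (N : ℝ≥0∞) ^ finrank ℝ E * c := by
        rw [Measure.addHaar_closedBall μ y (by positivity), mul_pow,
          ENNReal.ofReal_mul (by positivity), ENNReal.ofReal_pow (by positivity),
          ENNReal.ofReal_natCast, mul_assoc]
  rw [← ENat.toENNReal_le, ENat.toENNReal_pow, ENat.toENNReal_coe]
  exact (ENNReal.mul_le_mul_iff_left hc0 hctop).1 key

section BoundaryScale

variable {X : Type*} [PseudoMetricSpace X]

noncomputable def boundaryScale (Φ : Set (Set X)) (y : X) : ℝ :=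
  (⨆ Υ ∈ Φ, min 1 (infEDist y Υᶜ)).toReal

theorem iSup_min_one_infEDist_ne_top (Φ : Set (Set X)) (y : X) :
    ⨆ Υ ∈ Φ, min 1 (infEDist y Υᶜ) ≠ ∞ :=
  ne_top_of_le_ne_top ENNReal.one_ne_top (iSup₂_le fun _ _ => min_le_left _ _)

theorem boundaryScale_le_add (Φ : Set (Set X)) (x z : X) :
    boundaryScale Φ x ≤ boundaryScale Φ z + dist x z := by
  have key : ⨆ Υ ∈ Φ, min 1 (infEDist x Υᶜ) ≤
      (⨆ Υ ∈ Φ, min 1 (infEDist z Υᶜ)) + edist x z := by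
    refine iSup₂_le fun Υ hΥ => ?_
    calc min 1 (infEDist x Υᶜ) ≤ min (1 + edist x z) (infEDist z Υᶜ + edist x z) :=
          min_le_min le_self_add infEDist_le_infEDist_add_edist
      _ = min 1 (infEDist z Υᶜ) + edist x z := min_add_add_right _ _ _
      _ ≤ _ := add_le_add (le_iSup₂ (f := fun Υ _ => min 1 (infEDist z Υᶜ)) Υ hΥ) le_rfl
  have hne := iSup_min_one_infEDist_ne_top Φ z
  have := ENNReal.toReal_mono (ENNReal.add_ne_top.2 ⟨hne, edist_ne_top x z⟩) key
  rwa [ENNReal.toReal_add hne (edist_ne_top x z), ← dist_edist] at this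

theorem closedBall_subset_sUnion_of_lt_boundaryScale {Φ : Set (Set X)} {y : X} {r : ℝ}
    (hr : r < boundaryScale Φ y) : closedBall y r ⊆ ⋃₀ Φ := by
  rcases lt_or_ge r 0 with hr0 | hr0
  · simp [closedBall_eq_empty.2 hr0]
  obtain ⟨Υ, hΥ, hlt⟩ := lt_biSup_iff.1 <|
    (ENNReal.ofReal_lt_iff_lt_toReal hr0 (iSup_min_one_infEDist_ne_top Φ y)).2 hr
  rw [← closedEBall_ofReal hr0]
  exact (disjoint_compl_right_iff_subset.1 <| disjoint_closedEBall_of_lt_infEDist <|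
    hlt.trans_le (min_le_right _ _)).trans (subset_sUnion_of_mem hΥ)

end BoundaryScale

section WhitneyNet

variable {X : Type*} [PseudoMetricSpace X]

structure IsWhitneyNet (U : Set X) (h : X → ℝ) (B : Set X) : Prop where
  subset : B ⊆ U
  pos : ∀ y ∈ U, 0 < h y
  le_add_dist : ∀ x ∈ U, ∀ z ∈ U, h x ≤ h z + dist x z / 20
  closedBall_subset : ∀ y ∈ U, closedBall y (10 * h y) ⊆ U
  separated : B.Pairwise fun b b' => h b + h b' < dist b b'
  covers : ∀ z ∈ U, ∃ b ∈ B, dist z b ≤ 5 * h b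

def overlaps (h : X → ℝ) (B : Set X) (y : X) : Set X :=
  {b ∈ B | (closedBall b (10 * h b) ∩ closedBall y (10 * h y)).Nonempty}

noncomputable def bumpSum (h : X → ℝ) (B : Set X) (z : X) : ℝ :=
  ∑' c : B, bump (c : X) (5 * h c) z

noncomputable def whitneyPartition (h : X → ℝ) (B : Set X) (b z : X) : ℝ :=
  bump b (5 * h b) z / bumpSum h B z

variable {U : Set X} {h : X → ℝ} {B : Set X}

theorem IsWhitneyNet.exists (hpos : ∀ y ∈ U, 0 < h y)
    (hlip : ∀ x ∈ U, ∀ z ∈ U, h x ≤ h z + dist x z / 20)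
    (hball : ∀ y ∈ U, closedBall y (10 * h y) ⊆ U) : ∃ B, IsWhitneyNet U h B := by
  obtain ⟨B, hBU, hsep, hnear⟩ :=
    exists_separated_subset_forall_dist_le U h fun y hy => (hpos y hy).le
  refine ⟨B, ⟨hBU, hpos, hlip, hball, hsep, fun z hz => ?_⟩⟩
  obtain ⟨b, hb, hzb⟩ := hnear z hz
  exact ⟨b, hb, by linarith [hlip z hz b (hBU hb), hpos b (hBU hb)]⟩

theorem IsWhitneyNet.countable [TopologicalSpace.SeparableSpace X] (hB : IsWhitneyNet U h B) :
    B.Countable :=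
  hB.separated.countable_of_add_lt_dist fun b hb => hB.pos b (hB.subset hb)

theorem le_three_mul_of_closedBall_inter_nonempty
    (hlip : ∀ x ∈ U, ∀ z ∈ U, h x ≤ h z + dist x z / 20) {b y : X} (hb : b ∈ U)
    (hy : y ∈ U)
    (hby : (closedBall b (10 * h b) ∩ closedBall y (10 * h y)).Nonempty) :
    h y ≤ 3 * h b ∧ h b ≤ 3 * h y ∧ dist b y ≤ 40 * h y := by
  obtain ⟨u, hub, huy⟩ := hby
  have hd : dist b y ≤ 10 * h b + 10 * h y :=
    (dist_triangle b u y).trans (add_le_add (mem_closedBall'.1 hub) (mem_closedBall.1 huy))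
  have h₁ := hlip b hb y hy
  have h₂ := hlip y hy b hb
  rw [dist_comm] at h₂
  exact ⟨by linarith, by linarith, by linarith⟩

theorem IsWhitneyNet.mem_closedBall_of_bump_ne_zero (hB : IsWhitneyNet U h B) {b z : X}
    (hb : b ∈ U) (hne : bump b (5 * h b) z ≠ 0) : z ∈ closedBall b (10 * h b) := by
  have := support_bump_subset (by linarith [hB.pos b hb]) hne
  rwa [← mul_assoc, show (2 : ℝ) * 5 = 10 by norm_num] at this

theorem IsWhitneyNet.mem_overlaps_of_bump_ne_zero (hB : IsWhitneyNet U h B) {b y z : X}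
    (hb : b ∈ B) (hz : z ∈ closedBall y (10 * h y)) (hne : bump b (5 * h b) z ≠ 0) :
    b ∈ overlaps h B y :=
  ⟨hb, z, hB.mem_closedBall_of_bump_ne_zero (hB.subset hb) hne, hz⟩

theorem IsWhitneyNet.abs_bump_sub_le (hB : IsWhitneyNet U h B) {b y z w : X} (hb : b ∈ B)
    (hy : y ∈ U) (hz : z ∈ closedBall y (10 * h y)) (hw : w ∈ closedBall y (10 * h y)) :
    |bump b (5 * h b) z - bump b (5 * h b) w| ≤ 3 / (5 * h y) * dist z w := by
  have hy0 := hB.pos y hy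
  by_cases hby : b ∈ overlaps h B y
  · have hb0 := hB.pos b (hB.subset hb)
    have hcomp :=
      (le_three_mul_of_closedBall_inter_nonempty hB.le_add_dist (hB.subset hb) hy hby.2).1
    calc |bump b (5 * h b) z - bump b (5 * h b) w| ≤ dist z w / (5 * h b) :=
          abs_bump_sub_bump_le (by positivity)
      _ = 1 / (5 * h b) * dist z w := by ring
      _ ≤ 3 / (5 * h y) * dist z w := by
          refine mul_le_mul_of_nonneg_right ?_ dist_nonneg
          rw [div_le_div_iff₀ (by positivity) (by positivity)]
          linarith
  · have hzero : ∀ x ∈ closedBall y (10 * h y), bump b (5 * h b) x = 0 := fun x hx =>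
      by_contra fun hne => hby (hB.mem_overlaps_of_bump_ne_zero hb hx hne)
    rw [hzero z hz, hzero w hw, sub_zero, abs_zero]
    positivity

theorem whitneyPartition_nonneg {b z : X} : 0 ≤ whitneyPartition h B b z :=
  div_nonneg bump_nonneg (tsum_nonneg fun _ => bump_nonneg)

theorem IsWhitneyNet.tsupport_whitneyPartition_subset (hB : IsWhitneyNet U h B) {b : X}
    (hb : b ∈ U) : tsupport (whitneyPartition h B b) ⊆ closedBall b (10 * h b) :=
  closure_minimal (fun _ hz => hB.mem_closedBall_of_bump_ne_zero hb (div_ne_zero_iff.1 hz).1)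
    isClosed_closedBall

end WhitneyNet

section FiniteDimensional

variable {Y : Type*} [NormedAddCommGroup Y] [NormedSpace ℝ Y] [FiniteDimensional ℝ Y]
  {U : Set Y} {h : Y → ℝ} {B : Set Y}

theorem IsWhitneyNet.encard_overlaps_le (hB : IsWhitneyNet U h B) {y : Y} (hy : y ∈ U) :
    (overlaps h B y).encard ≤ 129 ^ finrank ℝ Y := by
  have hy0 := hB.pos y hy
  have hcomp := fun b (hb : b ∈ overlaps h B y) =>
    le_three_mul_of_closedBall_inter_nonempty hB.le_add_dist (hB.subset hb.1) hy hb.2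
  -- The balls of radius `h y / 3` around the points of `overlaps h B y` are disjoint and lie in
  -- `closedBall y (43 * h y)`; the constant is `129 = 43 * 3`.
  exact_mod_cast encard_le_pow_finrank_of_pairwiseDisjoint (y := y) (r := h y / 3)
    (R := 43 * h y) (N := 129) (by positivity)
    (fun b hb b' hb' hne => closedBall_disjoint_closedBall <| by
      linarith [hB.separated hb.1 hb'.1 hne, (hcomp b hb).1, (hcomp b' hb').1])
    (fun b hb => closedBall_subset_closedBall' <| by linarith [(hcomp b hb).2.2])
    (by linarith)

theorem IsWhitneyNet.finite_overlaps (hB : IsWhitneyNet U h B) {y : Y} (hy : y ∈ U) :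
    (overlaps h B y).Finite :=
  finite_of_encard_le_coe (k := 129 ^ finrank ℝ Y) (by exact_mod_cast hB.encard_overlaps_le hy)

theorem IsWhitneyNet.summable_bump (hB : IsWhitneyNet U h B) (z : Y) :
    Summable fun c : B => bump (c : Y) (5 * h c) z := by
  by_cases hz : z ∈ U
  · refine summable_of_hasFiniteSupport <|
      ((hB.finite_overlaps hz).preimage Subtype.val_injective.injOn).subset fun c hc => ?_
    exact hB.mem_overlaps_of_bump_ne_zero c.2 (mem_closedBall_self (by linarith [hB.pos z hz])) hc
  · have hzero : ∀ c : B, bump (c : Y) (5 * h c) z = 0 := fun c => by_contra fun hne =>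
      hz <| hB.closedBall_subset c (hB.subset c.2) <|
        hB.mem_closedBall_of_bump_ne_zero (hB.subset c.2) hne
    simp only [hzero, summable_zero]

theorem IsWhitneyNet.bump_le_bumpSum (hB : IsWhitneyNet U h B) {b : Y} (hb : b ∈ B) (z : Y) :
    bump b (5 * h b) z ≤ bumpSum h B z :=
  (hB.summable_bump z).le_tsum ⟨b, hb⟩ fun _ _ => bump_nonneg

theorem IsWhitneyNet.one_le_bumpSum (hB : IsWhitneyNet U h B) {z : Y} (hz : z ∈ U) :
    1 ≤ bumpSum h B z := by
  obtain ⟨b, hb, hzb⟩ := hB.covers z hz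
  calc 1 = bump b (5 * h b) z := (bump_eq_one (by linarith [hB.pos b (hB.subset hb)]) hzb).symm
    _ ≤ bumpSum h B z := hB.bump_le_bumpSum hb z

theorem IsWhitneyNet.abs_bumpSum_sub_le (hB : IsWhitneyNet U h B) {y z w : Y} (hy : y ∈ U)
    (hz : z ∈ closedBall y (10 * h y)) (hw : w ∈ closedBall y (10 * h y)) :
    |bumpSum h B z - bumpSum h B w| ≤ 129 ^ finrank ℝ Y * (3 / (5 * h y)) * dist z w := by
  have hrange : overlaps h B y ⊆ range ((↑) : B → Y) := by
    rw [Subtype.range_coe]; exact sep_subset _ _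
  have hcard :
      (Subtype.val ⁻¹' overlaps h B y : Set B).encard ≤ (129 ^ finrank ℝ Y : ℕ) := by
    rw [encard_preimage_of_injective_subset_range Subtype.val_injective hrange]
    exact_mod_cast hB.encard_overlaps_le hy
  exact_mod_cast abs_tsum_sub_tsum_le (f := fun (c : B) => bump (c : Y) (5 * h c))
    (by have := hB.pos y hy; positivity) hcard
    (fun c hc x hx => by_contra fun hne => hc (hB.mem_overlaps_of_bump_ne_zero c.2 hx hne))
    (fun c _ x hx x' hx' => hB.abs_bump_sub_le c.2 hy hx hx') hz hw

theorem IsWhitneyNet.whitneyPartition_le_one (hB : IsWhitneyNet U h B) {b : Y} (hb : b ∈ B)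
    (z : Y) : whitneyPartition h B b z ≤ 1 :=
  div_le_one_of_le₀ (hB.bump_le_bumpSum hb z) (tsum_nonneg fun _ => bump_nonneg)

theorem IsWhitneyNet.hasSum_whitneyPartition (hB : IsWhitneyNet U h B) {y : Y} (hy : y ∈ U) :
    HasSum (fun b : B => whitneyPartition h B b y) 1 := by
  have hS : bumpSum h B y ≠ 0 := by linarith [hB.one_le_bumpSum hy]
  have : HasSum _ (bumpSum h B y / bumpSum h B y) :=
    (hB.summable_bump y).hasSum.div_const (bumpSum h B y)
  rwa [div_self hS] at this

theorem IsWhitneyNet.lipschitzOnWith_whitneyPartition (hB : IsWhitneyNet U h B) {b y : Y}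
    (hb : b ∈ B) (hy : y ∈ U) :
    LipschitzOnWith (Real.toNNReal ((130 : ℝ) ^ finrank ℝ Y / h y)) (whitneyPartition h B b)
      (closedBall y (10 * h y)) := by
  refine LipschitzOnWith.of_dist_le_mul fun z hz w hw => ?_
  -- `hconst` below needs `1 ≤ finrank ℝ Y`.
  rcases subsingleton_or_nontrivial Y with _ | _
  · simp [Subsingleton.elim z w]
  have hy0 := hB.pos y hy
  have hS : ∀ x ∈ closedBall y (10 * h y), 1 ≤ bumpSum h B x :=
    fun x hx => hB.one_le_bumpSum (hB.closedBall_subset y hy hx)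
  have hconst :
      (1 + 129 ^ finrank ℝ Y) * (3 / (5 * h y)) ≤ (130 : ℝ) ^ finrank ℝ Y / h y := by
    have h129 : (129 : ℝ) ^ finrank ℝ Y ≤ 130 ^ finrank ℝ Y :=
      pow_le_pow_left₀ (by norm_num) (by norm_num) _
    have h130 : (130 : ℝ) ≤ 130 ^ finrank ℝ Y := le_self_pow₀ (by norm_num) finrank_pos.ne'
    rw [mul_div_assoc', div_le_div_iff₀ (by positivity) hy0]
    nlinarith
  rw [Real.dist_eq, Real.coe_toNNReal _ (by positivity)]
  calc |whitneyPartition h B b z - whitneyPartition h B b w|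
      ≤ |bump b (5 * h b) z - bump b (5 * h b) w| + |bumpSum h B z - bumpSum h B w| :=
        abs_div_sub_div_le bump_nonneg (hB.bump_le_bumpSum hb w) (hS z hz) (by linarith [hS w hw])
    _ ≤ 3 / (5 * h y) * dist z w + 129 ^ finrank ℝ Y * (3 / (5 * h y)) * dist z w :=
        add_le_add (hB.abs_bump_sub_le hb hy hz hw) (hB.abs_bumpSum_sub_le hy hz hw)
    _ = (1 + 129 ^ finrank ℝ Y) * (3 / (5 * h y)) * dist z w := by ring
    _ ≤ 130 ^ finrank ℝ Y / h y * dist z w := mul_le_mul_of_nonneg_right hconst dist_nonneg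

end FiniteDimensional

theorem stmt_4_general (Y : Type*) [NormedAddCommGroup Y] [NormedSpace ℝ Y] [FiniteDimensional ℝ Y]
    (Φ : Set (Set Y))
    (h : Y → ℝ)
    (hh : ∀ y ∈ ⋃₀ Φ,
      h y = (1 / 20) * (⨆ Υ ∈ Φ, min 1 (EMetric.infEdist y Υᶜ)).toReal)
    (hpos : ∀ y ∈ ⋃₀ Φ, 0 < h y) :
    ∃ B : Set Y, B.Countable ∧ B ⊆ ⋃₀ Φ ∧ ∃ g : Y → Y → ℝ,
      (∀ y ∈ B,
        {b ∈ B | (closedBall b (10 * h b) ∩ closedBall y (10 * h y)).Nonempty}.encard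
          ≤ ((129 : ℕ∞) ^ finrank ℝ Y)) ∧
      (∀ b ∈ B, (∀ y, 0 ≤ g b y ∧ g b y ≤ 1) ∧
        tsupport (g b) ⊆ closedBall b (10 * h b) ∧
        ∀ y ∈ ⋃₀ Φ,
          LipschitzOnWith (Real.toNNReal ((130 : ℝ) ^ finrank ℝ Y / h y)) (g b)
            (closedBall y (10 * h y))) ∧
      (∀ y ∈ ⋃₀ Φ, HasSum (fun b : B => g b y) 1) := by
  have hscale : ∀ y ∈ ⋃₀ Φ, h y = boundaryScale Φ y / 20 :=
    fun y hy => (hh y hy).trans (one_div_mul_eq_div _ _)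
  obtain ⟨B, hB⟩ := IsWhitneyNet.exists hpos
    (fun x hx z hz => by rw [hscale x hx, hscale z hz]; linarith [boundaryScale_le_add Φ x z])
    (fun y hy => closedBall_subset_sUnion_of_lt_boundaryScale <| by
      linarith [hscale y hy, hpos y hy])
  exact ⟨B, hB.countable, hB.subset, whitneyPartition h B,
    fun y hy => hB.encard_overlaps_le (hB.subset hy),
    fun b hb => ⟨fun y => ⟨whitneyPartition_nonneg, hB.whitneyPartition_le_one hb y⟩,
      hB.tsupport_whitneyPartition_subset (hB.subset hb),
      fun y hy => hB.lipschitzOnWith_whitneyPartition hb hy⟩,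
    fun y hy => hB.hasSum_whitneyPartition hy⟩

/-- Partition of unity subordinate to a family `Φ` of open sets in a finite dimensional
normed space, with controlled overlap and Lipschitz constants. -/
theorem stmt_4 (Y : Type*) [NormedAddCommGroup Y] [NormedSpace ℝ Y] [FiniteDimensional ℝ Y]
    (Φ : Set (Set Y)) (hΦ : ∀ Υ ∈ Φ, IsOpen Υ)
    (h : Y → ℝ)
    (hh : ∀ y ∈ ⋃₀ Φ,
      h y = (1 / 20) * (⨆ Υ ∈ Φ, min 1 (EMetric.infEdist y Υᶜ)).toReal)
    (hpos : ∀ y ∈ ⋃₀ Φ, 0 < h y) :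
    ∃ B : Set Y, B.Countable ∧ B ⊆ ⋃₀ Φ ∧ ∃ g : Y → Y → ℝ,
      (∀ y ∈ B,
        {b ∈ B | (closedBall b (10 * h b) ∩ closedBall y (10 * h y)).Nonempty}.encard
          ≤ ((129 : ℕ∞) ^ finrank ℝ Y)) ∧
      (∀ b ∈ B, (∀ y, 0 ≤ g b y ∧ g b y ≤ 1) ∧
        tsupport (g b) ⊆ closedBall b (10 * h b) ∧
        ∀ y ∈ ⋃₀ Φ,
          LipschitzOnWith (Real.toNNReal ((130 : ℝ) ^ finrank ℝ Y / h y)) (g b)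
            (closedBall y (10 * h y))) ∧
      (∀ y ∈ ⋃₀ Φ, HasSum (fun b : B => g b y) 1) :=
  stmt_4_general Y Φ h hh hpos
end

section
/- Suppose 1 ≤ q ≤ p ≤ ∞ with q < ∞, μ is a measure over a set X, G is a countable collection of μ-measurable functions from X to {t : 0 ≤ t ≤ ∞}, 1 ≤ κ < ∞, card ( { g ∈ G : g(x) > 0 } ) ≤ κ for μ-almost all x, and f(x) = Σ_{g ∈ G} g(x) for μ-almost all x. Then ‖f‖_{L^p(μ)} ≤ κ · ( Σ_{g ∈ G} ‖g‖_{L^p(μ)}^q )^{1/q}, and moreover ‖f‖_{L^∞(μ)} ≤ κ · sup ( {0} ∪ { ‖g‖_{L^∞(μ)} : g ∈ G } ). -/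
open MeasureTheory Set
open scoped ENNReal

/-- The `L^p(μ)` norm of a `[0, ∞]`-valued function: `(∫ h^p dμ)^(1/p)` for `p < ∞`, and the
essential supremum for `p = ∞`. -/
noncomputable def lpNormENNReal {X : Type*} [MeasurableSpace X] (μ : Measure X)
    (p : ℝ≥0∞) (f : X → ℝ≥0∞) : ℝ≥0∞ :=
  if p = ∞ then essSup f μ else (∫⁻ x, f x ^ p.toReal ∂μ) ^ (1 / p.toReal)

/-! At almost every point at most `κ` of the functions are positive, so `f ≤ κ · sup_g g`
pointwise a.e.  This gives the `L^∞` bound directly; for `p < ∞` it gives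
`f^p ≤ κ^p · sup_g g^p ≤ κ^p · ∑_g g^p`, and integrating yields
`‖f‖_p ≤ κ · (∑_g ‖g‖_p^p)^{1/p}`, which is at most the `ℓ^q` expression since
`ℓ^q ⊆ ℓ^p` contractively for `q ≤ p`; for `p = ∞`, `sup_g ‖g‖_∞` is itself at most the
`ℓ^q` expression. -/

namespace ENNReal

variable {ι : Type*}

theorem iSup_le_tsum_rpow_rpow (a : ι → ℝ≥0∞) {r : ℝ} (hr : 0 < r) :
    ⨆ i, a i ≤ (∑' i, a i ^ r) ^ (1 / r) :=
  iSup_le fun i => calc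
    a i = (a i ^ r) ^ (1 / r) := by rw [one_div, rpow_rpow_inv hr.ne']
    _ ≤ (∑' i, a i ^ r) ^ (1 / r) := by gcongr; exact ENNReal.le_tsum i

theorem tsum_rpow_rpow_le_of_exponent_le (a : ι → ℝ≥0∞) {q p : ℝ} (hq : 0 < q) (hqp : q ≤ p) :
    (∑' i, a i ^ p) ^ (1 / p) ≤ (∑' i, a i ^ q) ^ (1 / q) := by
  set N := (∑' i, a i ^ q) ^ (1 / q) with hN
  have hp : 0 < p := hq.trans_le hqp
  have hpq : 0 ≤ p - q := sub_nonneg.2 hqp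
  have hsplit (x : ℝ≥0∞) : x ^ p = x ^ q * x ^ (p - q) := by
    rw [← rpow_add_of_nonneg _ _ hq.le hpq, add_sub_cancel]
  -- each term is bounded by the `ℓ^q` norm `N`, so `a i ^ p ≤ a i ^ q * N ^ (p - q)`
  have hsum : ∑' i, a i ^ p ≤ N ^ p := calc
    ∑' i, a i ^ p ≤ ∑' i, a i ^ q * N ^ (p - q) := ENNReal.tsum_le_tsum fun i => by
        rw [hsplit]
        gcongr
        exact (le_iSup a i).trans (iSup_le_tsum_rpow_rpow a hq)
    _ = N ^ q * N ^ (p - q) := by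
        rw [ENNReal.tsum_mul_right]
        congr 1
        rw [hN, one_div, rpow_inv_rpow hq.ne']
    _ = N ^ p := (hsplit N).symm
  calc (∑' i, a i ^ p) ^ (1 / p) ≤ (N ^ p) ^ (1 / p) := by gcongr
    _ = N := by rw [one_div, rpow_rpow_inv hp.ne']

end ENNReal

theorem tsum_subtype_le_ncard_mul_iSup {α : Type*} (s : Set α) (b : α → ℝ≥0∞)
    (hfin : {i ∈ s | 0 < b i}.Finite) :
    ∑' i : s, b i ≤ {i ∈ s | 0 < b i}.ncard * ⨆ i : s, b i := by
  rw [tsum_subtype s b, Set.ncard_eq_toFinset_card _ hfin, ← nsmul_eq_mul]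
  have hsupp : ∀ i ∉ hfin.toFinset, s.indicator b i = 0 := by
    intro i hi
    rw [hfin.mem_toFinset] at hi
    by_cases his : i ∈ s
    · rw [indicator_of_mem his]
      exact nonpos_iff_eq_zero.1 (not_lt.1 fun hpos => hi ⟨his, hpos⟩)
    · exact indicator_of_notMem his b
  rw [tsum_eq_sum hsupp]
  refine Finset.sum_le_card_nsmul _ _ _ fun i hi => ?_
  have his : i ∈ s := (hfin.mem_toFinset.1 hi).1
  rw [indicator_of_mem his]
  exact le_iSup (fun j : s => b j) ⟨i, his⟩

section lpNormENNReal

variable {X : Type*} [MeasurableSpace X] {μ : Measure X}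

theorem lpNormENNReal_top (f : X → ℝ≥0∞) : lpNormENNReal μ ∞ f = essSup f μ := if_pos rfl

theorem lpNormENNReal_of_ne_top {p : ℝ≥0∞} (hp : p ≠ ∞) (f : X → ℝ≥0∞) :
    lpNormENNReal μ p f = (∫⁻ x, f x ^ p.toReal ∂μ) ^ (1 / p.toReal) := if_neg hp

variable {ι : Type*} [Countable ι] {g : ι → X → ℝ≥0∞} {f : X → ℝ≥0∞} {C : ℝ≥0∞}

theorem lpNormENNReal_top_le_mul_iSup (h : ∀ᵐ x ∂μ, f x ≤ C * ⨆ i, g i x) :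
    lpNormENNReal μ ∞ f ≤ C * ⨆ i, lpNormENNReal μ ∞ (g i) := by
  simp only [lpNormENNReal_top]
  have hg : ∀ᵐ x ∂μ, ∀ i, g i x ≤ essSup (g i) μ := ae_all_iff.2 fun i => ae_le_essSup
  refine essSup_le_of_ae_le _ ?_
  filter_upwards [h, hg] with x hfx hgx
  exact hfx.trans (by gcongr with i; exact hgx i)

theorem lpNormENNReal_le_mul_tsum (hg : ∀ i, AEMeasurable (g i) μ) {p : ℝ≥0∞} (hp0 : p ≠ 0)
    (hp : p ≠ ∞) (h : ∀ᵐ x ∂μ, f x ≤ C * ⨆ i, g i x) :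
    lpNormENNReal μ p f ≤ C * (∑' i, lpNormENNReal μ p (g i) ^ p.toReal) ^ (1 / p.toReal) := by
  simp only [lpNormENNReal_of_ne_top hp, one_div]
  set r := p.toReal
  have hr : 0 < r := ENNReal.toReal_pos hp0 hp
  have hgr : ∀ i, AEMeasurable (fun x => g i x ^ r) μ := fun i => (hg i).pow_const r
  have hint : ∫⁻ x, f x ^ r ∂μ ≤ C ^ r * ∑' i, ∫⁻ x, g i x ^ r ∂μ := by
    rw [← lintegral_tsum hgr, ← lintegral_const_mul'' _ (AEMeasurable.tsum hgr)]
    refine lintegral_mono_ae ?_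
    filter_upwards [h] with x hx
    calc f x ^ r ≤ (C * (∑' i, g i x ^ r) ^ (1 / r)) ^ r := by
          gcongr
          exact hx.trans (by gcongr; exact ENNReal.iSup_le_tsum_rpow_rpow _ hr)
      _ = C ^ r * ∑' i, g i x ^ r := by
          rw [ENNReal.mul_rpow_of_nonneg _ _ hr.le, one_div, ENNReal.rpow_inv_rpow hr.ne']
  simp only [ENNReal.rpow_inv_rpow hr.ne']
  calc (∫⁻ x, f x ^ r ∂μ) ^ r⁻¹ ≤ (C ^ r * ∑' i, ∫⁻ x, g i x ^ r ∂μ) ^ r⁻¹ := by gcongr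
    _ = C * (∑' i, ∫⁻ x, g i x ^ r ∂μ) ^ r⁻¹ := by
        rw [ENNReal.mul_rpow_of_nonneg _ _ (inv_nonneg.2 hr.le), ENNReal.rpow_rpow_inv hr.ne']

end lpNormENNReal

theorem stmt_7_general {X : Type*} [MeasurableSpace X] (μ : Measure X)
    (q p : ℝ≥0∞) (hq1 : 1 ≤ q) (hqp : q ≤ p) (hq : q ≠ ∞)
    (G : Set (X → ℝ≥0∞)) (hGc : G.Countable) (hGm : ∀ g ∈ G, Measurable g)
    (κ : ℝ)
    (hcard : ∀ᵐ x ∂μ, {g ∈ G | 0 < g x}.Finite ∧ ({g ∈ G | 0 < g x}.ncard : ℝ) ≤ κ)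
    (f : X → ℝ≥0∞) (hf : ∀ᵐ x ∂μ, f x = ∑' g : G, (g : X → ℝ≥0∞) x) :
    lpNormENNReal μ p f ≤ ENNReal.ofReal κ *
        (∑' g : G, lpNormENNReal μ p (g : X → ℝ≥0∞) ^ q.toReal) ^ (1 / q.toReal) ∧
    lpNormENNReal μ ∞ f ≤ ENNReal.ofReal κ *
        ⨆ g : G, lpNormENNReal μ ∞ (g : X → ℝ≥0∞) := by
  have : Countable G := hGc.to_subtype
  have hq0 : 0 < q.toReal := ENNReal.toReal_pos (one_pos.trans_le hq1).ne' hq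
  have hpt : ∀ᵐ x ∂μ, f x ≤ ENNReal.ofReal κ * ⨆ g : G, (g : X → ℝ≥0∞) x := by
    filter_upwards [hcard, hf] with x ⟨hfin, hκ⟩ hfx
    rw [hfx]
    refine (tsum_subtype_le_ncard_mul_iSup G (· x) hfin).trans ?_
    gcongr
    rw [← ENNReal.ofReal_natCast]
    exact ENNReal.ofReal_le_ofReal hκ
  have htop := lpNormENNReal_top_le_mul_iSup hpt
  refine ⟨?_, htop⟩
  by_cases hp : p = ∞
  · subst hp
    exact htop.trans (by gcongr; exact ENNReal.iSup_le_tsum_rpow_rpow _ hq0)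
  · have hqp' : q.toReal ≤ p.toReal := ENNReal.toReal_mono hp hqp
    refine (lpNormENNReal_le_mul_tsum (fun g : G => (hGm g g.2).aemeasurable)
      (one_pos.trans_le (hq1.trans hqp)).ne' hp hpt).trans ?_
    gcongr
    exact ENNReal.tsum_rpow_rpow_le_of_exponent_le _ hq0 hqp'

/-- If almost everywhere at most `κ` of the countably many nonnegative functions in `G` are
positive, and `f` is their sum, then the `L^p` norm of `f` is bounded by `κ` times the
`ℓ^q`-combination of the `L^p` norms of the members of `G`; moreover the `L^∞` norm of `f`
is bounded by `κ` times the supremum of the `L^∞` norms. -/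
theorem stmt_7 {X : Type*} [MeasurableSpace X] (μ : Measure X)
    (q p : ℝ≥0∞) (hq1 : 1 ≤ q) (hqp : q ≤ p) (hq : q ≠ ∞)
    (G : Set (X → ℝ≥0∞)) (hGc : G.Countable) (hGm : ∀ g ∈ G, Measurable g)
    (κ : ℝ) (hκ : 1 ≤ κ)
    (hcard : ∀ᵐ x ∂μ, {g ∈ G | 0 < g x}.Finite ∧ ({g ∈ G | 0 < g x}.ncard : ℝ) ≤ κ)
    (f : X → ℝ≥0∞) (hf : ∀ᵐ x ∂μ, f x = ∑' g : G, (g : X → ℝ≥0∞) x) :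
    lpNormENNReal μ p f ≤ ENNReal.ofReal κ *
        (∑' g : G, lpNormENNReal μ p (g : X → ℝ≥0∞) ^ q.toReal) ^ (1 / q.toReal) ∧
    lpNormENNReal μ ∞ f ≤ ENNReal.ofReal κ *
        ⨆ g : G, lpNormENNReal μ ∞ (g : X → ℝ≥0∞) :=
  stmt_7_general μ q p hq1 hqp hq G hGc hGm κ hcard f hf
end

section
/- If f is a nonnegative Lebesgue measurable extended-real valued function on ℝ, O ⊆ ℝ is a set of Lebesgue measure zero, ε > 0, and j is a positive integer, then there exist real numbers b_1, …, b_j such that ε(i−1) < b_i < εi and b_i ∉ O for i = 1, …, j, and Σ_{i=1}^{j} (b_i − b_{i−1}) · f(b_i) ≤ 2 ∫ f dL¹, where b_0 = 0. -/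
/-!
Cut `(-ε, ∞)` into the intervals `Iₙ = (ε(n-1), εn)`. A measurable function is at most its mean
on a set of positive measure in `Iₙ`, so one can pick `bₙ ∈ Iₙ` outside the null set `O` with
`ε f(bₙ) ≤ ∫_{Iₙ} f`. Consecutive points are less than `2ε` apart, so the `n`-th term of the sum is
at most `2 ∫_{Iₙ} f`, and the intervals are disjoint.
-/

open MeasureTheory Set Function
open scoped ENNReal

theorem exists_mem_diff_null_measure_mul_le_setLIntegral {α : Type*} [MeasurableSpace α]
    {μ : Measure α} {s N : Set α} {f : α → ℝ≥0∞} (hs₀ : μ s ≠ 0) (hs : μ s ≠ ∞)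
    (hf : AEMeasurable f (μ.restrict s)) (hN : μ N = 0) :
    ∃ x ∈ s \ N, μ s * f x ≤ ∫⁻ y in s, f y ∂μ := by
  have hpos := measure_le_setLAverage_pos hs₀ hs hf
  rw [← measure_sdiff_null hN] at hpos
  obtain ⟨x, ⟨hxs, hx⟩, hxN⟩ := nonempty_of_measure_ne_zero hpos.ne'
  refine ⟨x, ⟨hxs, hxN⟩, ?_⟩
  rw [setLAverage_eq] at hx
  exact (mul_le_mul_right hx _).trans ENNReal.mul_div_le

theorem sum_setLIntegral_le_lintegral {α β : Type*} [MeasurableSpace α] {μ : Measure α}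
    {t : β → Set α} (s : Finset β) (hd : Pairwise (Disjoint on t))
    (ht : ∀ i, MeasurableSet (t i)) (f : α → ℝ≥0∞) :
    ∑ i ∈ s, ∫⁻ x in t i, f x ∂μ ≤ ∫⁻ x, f x ∂μ := by
  rw [← lintegral_biUnion_finset (hd.set_pairwise _) (fun i _ => ht i) f]
  exact setLIntegral_le_lintegral _ f

theorem ENNReal.ofReal_sub_mul_le_two_mul {x y ε : ℝ} {a A : ℝ≥0∞} (hxy : y - x ≤ 2 * ε)
    (ha : ENNReal.ofReal ε * a ≤ A) : ENNReal.ofReal (y - x) * a ≤ 2 * A :=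
  calc ENNReal.ofReal (y - x) * a
      ≤ ENNReal.ofReal (2 * ε) * a := by gcongr
    _ ≤ 2 * A := by rw [ENNReal.ofReal_mul zero_le_two, ENNReal.ofReal_ofNat, mul_assoc]; gcongr

theorem pairwise_disjoint_Ioo_mul_natCast_sub_one {ε : ℝ} (hε : 0 ≤ ε) :
    Pairwise (Disjoint on fun n : ℕ => Ioo (ε * ((n : ℝ) - 1)) (ε * n)) := by
  have hmono : Monotone fun n : ℕ => ε * ((n : ℝ) - 1) := fun m n h => by dsimp only; gcongr
  convert hmono.pairwise_disjoint_on_Ioo_succ using 3 with n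
  simp

theorem stmt_8_general (f : ℝ → ℝ≥0∞) (hf : Measurable f) (O : Set ℝ)
    (hO : volume O = 0) (ε : ℝ) (hε : 0 < ε) (j : ℕ) :
    ∃ b : ℕ → ℝ, b 0 = 0 ∧
      (∀ i, 1 ≤ i → i ≤ j → ε * ((i : ℝ) - 1) < b i ∧ b i < ε * i ∧ b i ∉ O) ∧
      ∑ i ∈ Finset.Icc 1 j, ENNReal.ofReal (b i - b (i - 1)) * f (b i)
        ≤ 2 * ∫⁻ x, f x := by
  set I : ℕ → Set ℝ := fun n => Ioo (ε * ((n : ℝ) - 1)) (ε * n)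
  have hvol (n : ℕ) : volume (I n) = ENNReal.ofReal ε := by
    simp only [I, Real.volume_Ioo]; ring_nf
  have hchoice (n : ℕ) : ∃ x ∈ I n \ O, ENNReal.ofReal ε * f x ≤ ∫⁻ y in I n, f y :=
    hvol n ▸ exists_mem_diff_null_measure_mul_le_setLIntegral (by simp [hvol, hε])
      (by simp [hvol]) hf.aemeasurable.restrict hO
  choose c hcI hc using hchoice
  set b : ℕ → ℝ := fun i => if i = 0 then 0 else c i
  have hbc (i : ℕ) (hi : 1 ≤ i) : b i = c i := if_neg (by omega)
  have hb_gt (i : ℕ) : ε * ((i : ℝ) - 1) < b i := by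
    rcases Nat.eq_zero_or_pos i with rfl | hi
    · simp [b, hε]
    · exact hbc i hi ▸ (hcI i).1.1
  have hterm (i : ℕ) (hi : 1 ≤ i) :
      ENNReal.ofReal (b i - b (i - 1)) * f (b i) ≤ 2 * ∫⁻ y in I i, f y := by
    refine hbc i hi ▸ ENNReal.ofReal_sub_mul_le_two_mul ?_ (hc i)
    have hprev := hb_gt (i - 1)
    have hcur := (hcI i).1.2
    push_cast [hi] at hprev hcur
    linarith
  refine ⟨b, rfl, fun i hi _ => ⟨hb_gt i, hbc i hi ▸ (hcI i).1.2, hbc i hi ▸ (hcI i).2⟩, ?_⟩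
  calc ∑ i ∈ Finset.Icc 1 j, ENNReal.ofReal (b i - b (i - 1)) * f (b i)
      ≤ ∑ i ∈ Finset.Icc 1 j, 2 * ∫⁻ y in I i, f y :=
        Finset.sum_le_sum fun i hi => hterm i (Finset.mem_Icc.1 hi).1
    _ ≤ 2 * ∫⁻ x, f x := by
      rw [← Finset.mul_sum]
      gcongr
      exact sum_setLIntegral_le_lintegral _ (pairwise_disjoint_Ioo_mul_natCast_sub_one hε.le)
        (fun _ => measurableSet_Ioo) f

/-- Choice of step points: for a nonnegative measurable `f : ℝ → [0, ∞]`, a null set `O`,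
`ε > 0`, and `j ≥ 1`, there are points `b_i ∈ (ε(i-1), εi) ∖ O` such that the Riemann-type
lower sum `Σ (b_i - b_{i-1}) f(b_i)` is at most `2 ∫ f dℒ¹`. -/
theorem stmt_8 (f : ℝ → ℝ≥0∞) (hf : Measurable f) (O : Set ℝ)
    (hO : volume O = 0) (ε : ℝ) (hε : 0 < ε) (j : ℕ) (hj : 0 < j) :
    ∃ b : ℕ → ℝ, b 0 = 0 ∧
      (∀ i, 1 ≤ i → i ≤ j → ε * ((i : ℝ) - 1) < b i ∧ b i < ε * i ∧ b i ∉ O) ∧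
      ∑ i ∈ Finset.Icc 1 j, ENNReal.ofReal (b i - b (i - 1)) * f (b i)
        ≤ 2 * ∫⁻ x, f x :=
  stmt_8_general f hf O hO ε hε j
end
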